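/- Let U × I be a neighborhood of (0,0) in ℂ × ℝ and let f : U × I → ℝ satisfy f(z,0) ≡ 0, with f, ∂f/∂t, and ∂²f/∂t² all C¹-smooth on U × I, and let α ∈ ℝ. Then (i + ∂f/∂t(z,t))·exp( α(it − f(z,t)) ) = i + ∂f/∂t(z,0) for all (z,t) ∈ U × I if and only if there exists a C¹-smooth function R : U → ℝ such that cos(R(z) + αt) ≠ 0 for all (z,t) ∈ U × I and f(z,t) = −(1/α) log| cos(R(z)+αt)/cos(R(z)) | for all (z,t) ∈ U × I in the case α ≠ 0, and f(z,t) = tan(R(z))·t for all (z,t) ∈ U × I in the case α = 0. -/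

import Mathlib

open Filter Set Metric Complex

/-!
Put `R = arctan (f_t(z,0))`, so that `f_t(z,0) = tan R` with `cos R > 0`. Taking real and
imaginary parts, the equation at `(z,t)` says exactly that `exp(-α f(z,t)) = cos(R+αt) / cos R`
and `f_t(z,t) = tan(R+αt)`. For `α ≠ 0` the first identity is the logarithmic formula; for
`α = 0` it is empty, the second one says that `f_t` is constant, and `f(z,0) = 0` gives
`f = tan R · t`. Conversely, differentiating either formula gives `f_t = tan(R+αt)`, and
`cos(R+αt) / cos R > 0` because `cos(R+α·)` has no zero on the connected interval.
-/

lemma I_add_mul_exp_eq_iff {α t F c c₀ : ℝ} :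
    (I + c) * exp (α * (I * t - F)) = I + c₀ ↔
      (c * Real.cos (α * t) - Real.sin (α * t)) * Real.exp (-(α * F)) = c₀ ∧
        (Real.cos (α * t) + c * Real.sin (α * t)) * Real.exp (-(α * F)) = 1 := by
  have hexp : exp (α * (I * t - F)) = Real.exp (-(α * F)) * exp ((α * t : ℝ) * I) := by
    rw [Complex.ofReal_exp, ← Complex.exp_add]; push_cast; ring_nf
  rw [hexp, Complex.exp_mul_I, ← Complex.ofReal_cos, ← Complex.ofReal_sin, Complex.ext_iff]
  simp only [Complex.mul_re, Complex.mul_im, Complex.add_re, Complex.add_im, Complex.I_re,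
    Complex.I_im, Complex.ofReal_re, Complex.ofReal_im]
  constructor <;> rintro ⟨h₁, h₂⟩ <;> constructor <;> linarith

lemma I_add_mul_exp_eq_I_add_tan_iff {α t F c R : ℝ} (hR : Real.cos R ≠ 0) :
    (I + c) * exp (α * (I * t - F)) = I + Real.tan R ↔
      Real.exp (-(α * F)) = Real.cos (R + α * t) / Real.cos R ∧ c = Real.tan (R + α * t) := by
  rw [I_add_mul_exp_eq_iff]
  generalize α * t = θ
  have hE : 0 < Real.exp (-(α * F)) := Real.exp_pos _
  generalize Real.exp (-(α * F)) = E at hE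
  have hpyth := Real.sin_sq_add_cos_sq θ
  constructor
  · rintro ⟨h₁, h₂⟩
    have hsin : Real.sin R = Real.tan R * Real.cos R := by
      rw [Real.tan_eq_sin_div_cos, div_mul_cancel₀ _ hR]
    have hcos : Real.cos (R + θ) = E * Real.cos R := by
      rw [Real.cos_add, hsin]
      linear_combination (-Real.cos R) * (Real.cos θ * h₂ - Real.sin θ * h₁ - E * hpyth)
    have hcos' : Real.cos (R + θ) ≠ 0 := by
      rw [hcos]
      exact mul_ne_zero hE.ne' hR
    refine ⟨by rw [hcos, mul_div_cancel_right₀ _ hR], ?_⟩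
    rw [Real.tan_eq_sin_div_cos, eq_div_iff hcos', hcos, Real.sin_add, hsin]
    linear_combination Real.cos R * (Real.cos θ * h₁ + Real.sin θ * h₂ - c * E * hpyth)
  · rintro ⟨rfl, rfl⟩
    have hcos : Real.cos (R + θ) ≠ 0 := fun h => by simp [h] at hE
    have hsinR : Real.sin R = Real.sin (R + θ) * Real.cos θ - Real.cos (R + θ) * Real.sin θ := by
      rw [← Real.sin_sub, add_sub_cancel_right]
    have hcosR : Real.cos R = Real.cos (R + θ) * Real.cos θ + Real.sin (R + θ) * Real.sin θ := by
      rw [← Real.cos_sub, add_sub_cancel_right]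
    rw [Real.tan_eq_sin_div_cos, Real.tan_eq_sin_div_cos]
    constructor
    · field_simp
      linear_combination -hsinR
    · field_simp
      linear_combination -hcosR

lemma IsPreconnected.mul_pos_of_ne_zero {X : Type*} [TopologicalSpace X] {s : Set X}
    {g : X → ℝ} (hs : IsPreconnected s) (hg : ContinuousOn g s) (hg₀ : ∀ x ∈ s, g x ≠ 0)
    {a b : X} (ha : a ∈ s) (hb : b ∈ s) : 0 < g a * g b := by
  have hIVT : ∀ {x y}, x ∈ s → y ∈ s → g x < 0 → 0 < g y → False := fun hx hy hgx hgy => by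
    obtain ⟨z, hz, hgz⟩ := hs.intermediate_value hx hy hg ⟨hgx.le, hgy.le⟩
    exact hg₀ z hz hgz
  rcases (hg₀ a ha).lt_or_gt with hga | hga <;> rcases (hg₀ b hb).lt_or_gt with hgb | hgb
  · exact mul_pos_of_neg_of_neg hga hgb
  · exact (hIVT ha hb hga hgb).elim
  · exact (hIVT hb ha hgb hga).elim
  · exact mul_pos hga hgb

lemma IsOpen.eqOn_mul_of_hasDerivAt {s : Set ℝ} (hs : IsOpen s) (hs' : IsPreconnected s)
    (h₀ : 0 ∈ s) {F : ℝ → ℝ} {c : ℝ} (hF₀ : F 0 = 0) (hF : ∀ t ∈ s, HasDerivAt F c t) :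
    EqOn F (c * ·) s :=
  hs.eqOn_of_deriv_eq hs' (fun t ht => (hF t ht).differentiableAt.differentiableWithinAt)
    (by fun_prop) (fun t ht => by simp [(hF t ht).deriv]) h₀ (by simp [hF₀])

lemma hasDerivAt_neg_inv_mul_log_abs_cos_div {α R t : ℝ} (hα : α ≠ 0) (hR : Real.cos R ≠ 0)
    (ht : Real.cos (R + α * t) ≠ 0) :
    HasDerivAt (fun s => -(1 / α) * Real.log |Real.cos (R + α * s) / Real.cos R|)
      (Real.tan (R + α * t)) t := by
  have hcos : HasDerivAt (fun s => Real.cos (R + α * s)) (-Real.sin (R + α * t) * α) t := by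
    simpa using (((hasDerivAt_id t).const_mul α).const_add R).cos
  simp only [Real.log_abs]
  refine (((hcos.div_const (Real.cos R)).log (div_ne_zero ht hR)).const_mul
    (-(1 / α))).congr_deriv ?_
  rw [Real.tan_eq_sin_div_cos]
  field_simp

lemma hasDerivAt_tan_of_eqOn {s : Set ℝ} (hs : IsOpen s) {α R : ℝ} {F : ℝ → ℝ}
    (hR : Real.cos R ≠ 0)
    (hcos : ∀ t ∈ s, Real.cos (R + α * t) ≠ 0)
    (hlog : α ≠ 0 → ∀ t ∈ s, F t = -(1 / α) * Real.log |Real.cos (R + α * t) / Real.cos R|)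
    (hlin : α = 0 → ∀ t ∈ s, F t = Real.tan R * t) {t : ℝ} (ht : t ∈ s) :
    HasDerivAt F (Real.tan (R + α * t)) t := by
  rcases eq_or_ne α 0 with rfl | hα
  · exact ((hasDerivAt_id t).const_mul (Real.tan R)).congr_of_eventuallyEq
      (eventuallyEq_of_mem (hs.mem_nhds ht) (hlin rfl)) |>.congr_deriv (by simp)
  · exact (hasDerivAt_neg_inv_mul_log_abs_cos_div hα hR (hcos t ht)).congr_of_eventuallyEq
      (eventuallyEq_of_mem (hs.mem_nhds ht) (hlog hα))

lemma I_add_mul_exp_eq_of_eqOn {s : Set ℝ} (hs : IsOpen s) (hs' : IsPreconnected s)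
    (h₀ : 0 ∈ s) {α R : ℝ} {F c : ℝ → ℝ} (hF : ∀ t ∈ s, HasDerivAt F (c t) t)
    (hcos : ∀ t ∈ s, Real.cos (R + α * t) ≠ 0)
    (hlog : α ≠ 0 → ∀ t ∈ s, F t = -(1 / α) * Real.log |Real.cos (R + α * t) / Real.cos R|)
    (hlin : α = 0 → ∀ t ∈ s, F t = Real.tan R * t) {t : ℝ} (ht : t ∈ s) :
    (I + c t) * exp (α * (I * t - F t)) = I + c 0 := by
  have hR : Real.cos R ≠ 0 := by simpa using hcos 0 h₀
  have hc : ∀ t ∈ s, c t = Real.tan (R + α * t) := fun t ht =>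
    (hF t ht).unique (hasDerivAt_tan_of_eqOn hs hR hcos hlog hlin ht)
  rw [hc 0 h₀, mul_zero, add_zero, I_add_mul_exp_eq_I_add_tan_iff hR]
  refine ⟨?_, hc t ht⟩
  rcases eq_or_ne α 0 with rfl | hα
  · simp [hR]
  have hpos : 0 < Real.cos (R + α * t) / Real.cos R := by
    have := hs'.mul_pos_of_ne_zero (by fun_prop) hcos ht h₀
    rw [mul_zero, add_zero] at this
    exact div_pos_iff.2 (mul_pos_iff.1 this)
  conv_rhs => rw [← Real.exp_log hpos]
  rw [hlog hα t ht, abs_of_pos hpos]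
  congr 1
  field_simp

theorem stmt_13 (ε δ α : ℝ) (hδ : 0 < δ)
    (f ft : ℂ → ℝ → ℝ)
    (hf0 : ∀ z ∈ ball (0:ℂ) ε, f z 0 = 0)
    (hft : ∀ z ∈ ball (0:ℂ) ε, ∀ t ∈ Set.Ioo (-δ) δ, HasDerivAt (fun s => f z s) (ft z t) t)
    (hftsm : ContDiffOn ℝ 1 (fun p : ℂ × ℝ => ft p.1 p.2) (ball (0:ℂ) ε ×ˢ Set.Ioo (-δ) δ)) :
    (∀ z ∈ ball (0:ℂ) ε, ∀ t ∈ Set.Ioo (-δ) δ,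
        (Complex.I + (ft z t : ℂ)) * Complex.exp ((α:ℂ) * (Complex.I * (t:ℂ) - (f z t : ℂ)))
          = Complex.I + (ft z 0 : ℂ)) ↔
    (∃ R : ℂ → ℝ, ContDiffOn ℝ 1 R (ball (0:ℂ) ε) ∧
      (∀ z ∈ ball (0:ℂ) ε, ∀ t ∈ Set.Ioo (-δ) δ, Real.cos (R z + α * t) ≠ 0) ∧
      (α ≠ 0 → ∀ z ∈ ball (0:ℂ) ε, ∀ t ∈ Set.Ioo (-δ) δ,
        f z t = -(1/α) * Real.log |Real.cos (R z + α * t) / Real.cos (R z)|) ∧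
      (α = 0 → ∀ z ∈ ball (0:ℂ) ε, ∀ t ∈ Set.Ioo (-δ) δ,
        f z t = Real.tan (R z) * t)) := by
  have h₀ : (0:ℝ) ∈ Ioo (-δ) δ := ⟨neg_lt_zero.2 hδ, hδ⟩
  constructor
  · intro h
    have hE : ∀ z ∈ ball (0:ℂ) ε, ∀ t ∈ Ioo (-δ) δ,
        Real.exp (-(α * f z t)) =
            Real.cos (Real.arctan (ft z 0) + α * t) / Real.cos (Real.arctan (ft z 0)) ∧
          ft z t = Real.tan (Real.arctan (ft z 0) + α * t) := fun z hz t ht =>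
      (I_add_mul_exp_eq_I_add_tan_iff (Real.cos_arctan_pos _).ne').1
        (by rw [Real.tan_arctan]; exact h z hz t ht)
    refine ⟨fun z => Real.arctan (ft z 0), ?_, fun z hz t ht hcos => ?_, fun hα z hz t ht => ?_,
      fun hα z hz t ht => ?_⟩
    · exact Real.contDiff_arctan.comp_contDiffOn
        (hftsm.comp (by fun_prop) fun z hz => mk_mem_prod hz h₀)
    · simpa [hcos] using (Real.exp_pos _).trans_eq (hE z hz t ht).1
    · rw [← (hE z hz t ht).1, abs_of_pos (Real.exp_pos _), Real.log_exp]
      field_simp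
    · subst hα
      have hft' : ∀ s ∈ Ioo (-δ) δ, HasDerivAt (f z) (ft z 0) s := fun s hs => by
        have hconst : ft z s = ft z 0 := by simpa using (hE z hz s hs).2
        exact hconst ▸ hft z hz s hs
      simpa using isOpen_Ioo.eqOn_mul_of_hasDerivAt isPreconnected_Ioo h₀ (hf0 z hz) hft' ht
  · rintro ⟨R, -, hcos, hlog, hlin⟩ z hz t ht
    exact I_add_mul_exp_eq_of_eqOn isOpen_Ioo isPreconnected_Ioo h₀ (hft z hz) (hcos z hz)
      (fun hα => hlog hα z hz) (fun hα => hlin hα z hz) ht
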